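/- The maps ρ_{λ,k} form a representation of the centrally extended based loop group of the ax+b group: let t > 0, k ∈ ℝ, λ : [0,2π] → ℂ with Re λ, Im λ ∈ L², let α₁, α₂ ∈ C²([0,2π],ℝ) be based loops (αᵢ(0) = αᵢ(2π) = 0), b₁, b₂ ∈ L²([0,2π],ℝ), and s₁, s₂ ∈ ℝ. Then pointwise on all functions f : C₀ → ℂ, ρ_{λ,k}(α₁,b₁,s₁) ∘ ρ_{λ,k}(α₂,b₂,s₂) = ρ_{λ,k}( α₁+α₂, e^{α₁}b₂+b₁, s₁+s₂+k ∫₀^{2π} α₁′(u) α₂(u) du ), i.e. ρ_{λ,k} is multiplicative for the centrally extended group law with 2-cocycle k ∫₀^{2π} α₁′(u)α₂(u) du. -/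

import Mathlib

open MeasureTheory Real

/-- Extension of a function on `[0, 2π]` to `ℝ` (by `0` outside). -/
noncomputable def pathExt (x : Set.Icc (0 : ℝ) (2 * π) → ℝ) : ℝ → ℝ :=
  fun u => if h : u ∈ Set.Icc (0 : ℝ) (2 * π) then x ⟨u, h⟩ else 0

/-- The integration-by-parts form `⟨h,x⟩ = h'(2π)x(2π) - ∫₀^{2π} x(u)h''(u) du` of the
Stieltjes integral `∫₀^{2π} h'(u) dx(u)`. -/
noncomputable def wienerPairing (h : ℝ → ℝ) (x : Set.Icc (0 : ℝ) (2 * π) → ℝ) : ℝ :=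
  deriv h (2 * π) * pathExt x (2 * π)
    - ∫ u in (0 : ℝ)..(2 * π), pathExt x u * deriv (deriv h) u

/-- The operator `ρ_{λ,k}(α, b, s)` of the centrally extended based loop group of the
`ax+b` group, acting on functionals of paths `x` on `[0,2π]`:
`(ρ_{λ,k}(α,b,s)f)(x) = e^{is} · exp(ik(α(2π)x(2π) - ∫₀^{2π} x α' du))
  · exp(-(1/(4t))∫α'² - (1/(2t))⟨α,x⟩) · exp(∫₀^{2π} λ b e^{x(u)} du) · f(x+α)`. -/
noncomputable def wienerRhoC (t k : ℝ) (lam : ℝ → ℂ) (α b : ℝ → ℝ) (s : ℝ)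
    (f : (Set.Icc (0 : ℝ) (2 * π) → ℝ) → ℂ) (x : Set.Icc (0 : ℝ) (2 * π) → ℝ) : ℂ :=
  Complex.exp (Complex.I * (s : ℂ)) *
  Complex.exp (Complex.I * (k : ℂ) *
    ((α (2 * π) * pathExt x (2 * π)
        - ∫ u in (0 : ℝ)..(2 * π), pathExt x u * deriv α u : ℝ) : ℂ)) *
  Complex.exp (((-(1 / (4 * t)) * ∫ u in (0 : ℝ)..(2 * π), (deriv α u) ^ 2)
      - (1 / (2 * t)) * wienerPairing α x : ℝ)) *
  Complex.exp (∫ u in (0 : ℝ)..(2 * π), lam u * (b u : ℂ) *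
      Complex.exp ((pathExt x u : ℝ) : ℂ)) *
  f (x + fun u => α u.1)

/-! Composing the two operators multiplies their scalar factors, the second one evaluated at the
shifted path `x + α₁`. Every exponent is built from Stieltjes integrals `∫₀^{2π} g dx`, which are
additive in `g` and in `x`, and shifting `x` by a smooth based loop `α` adds `∫₀^{2π} α' g`. In the
phase this produces the cocycle `k ∫₀^{2π} α₁' α₂`; in the Cameron–Martin exponent it produces
exactly the cross term of `∫₀^{2π} (α₁' + α₂')²`; in the multiplier, `e^{x + α₁} = e^{α₁} e^x`
turns `b₂` into `e^{α₁} b₂`. -/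

open Set

lemma pathExt_of_mem (x : Icc (0 : ℝ) (2 * π) → ℝ) {u : ℝ} (hu : u ∈ Icc (0 : ℝ) (2 * π)) :
    pathExt x u = x ⟨u, hu⟩ :=
  dif_pos hu

lemma pathExt_add (x y : Icc (0 : ℝ) (2 * π) → ℝ) : pathExt (x + y) = pathExt x + pathExt y := by
  funext u
  by_cases hu : u ∈ Icc (0 : ℝ) (2 * π)
  · simp only [Pi.add_apply, pathExt_of_mem _ hu]
  · simp only [pathExt, Pi.add_apply, dif_neg hu, add_zero]

lemma pathExt_restrict_of_mem (α : ℝ → ℝ) {u : ℝ} (hu : u ∈ Icc (0 : ℝ) (2 * π)) :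
    pathExt (fun v => α v.1) u = α u :=
  pathExt_of_mem _ hu

lemma continuousOn_pathExt {x : Icc (0 : ℝ) (2 * π) → ℝ} (hx : Continuous x) :
    ContinuousOn (pathExt x) (Icc (0 : ℝ) (2 * π)) := by
  have h02 : (0 : ℝ) ≤ 2 * π := by positivity
  refine (Continuous.Icc_extend' (h := h02) hx).continuousOn.congr fun u hu => ?_
  rw [pathExt_of_mem x hu, IccExtend_of_mem h02 x hu]

lemma intervalIntegrable_pathExt_mul {x : Icc (0 : ℝ) (2 * π) → ℝ} (hx : Continuous x)
    {g : ℝ → ℝ} (hg : Continuous g) :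
    IntervalIntegrable (fun u => pathExt x u * g u) volume 0 (2 * π) :=
  ((continuousOn_pathExt hx).mul hg.continuousOn).intervalIntegrable_of_Icc (by positivity)

section HolderBounds

variable {𝕜 : Type*} [NormedRing 𝕜] {a c : ℝ}

lemma memLp_top_of_continuousOn_Icc {g : ℝ → 𝕜} (hg : ContinuousOn g (Icc a c)) :
    MemLp g ⊤ (volume.restrict (Ioc a c)) := by
  obtain ⟨C, hC⟩ := isCompact_Icc.exists_bound_of_continuousOn hg
  exact memLp_top_of_bound ((hg.mono Ioc_subset_Icc_self).aestronglyMeasurable measurableSet_Ioc)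
    C (ae_restrict_of_forall_mem measurableSet_Ioc fun u hu => hC u (Ioc_subset_Icc_self hu))

lemma MeasureTheory.MemLp.continuousOn_mul {p : ENNReal} {g b : ℝ → 𝕜}
    (hb : MemLp b p (volume.restrict (Ioc a c))) (hg : ContinuousOn g (Icc a c)) :
    MemLp (fun u => g u * b u) p (volume.restrict (Ioc a c)) :=
  hb.mul' (memLp_top_of_continuousOn_Icc hg)

lemma intervalIntegrable_mul_mul_of_memLp_two (hac : a ≤ c) {F G H : ℝ → 𝕜}
    (hF : MemLp F 2 (volume.restrict (Ioc a c))) (hG : MemLp G 2 (volume.restrict (Ioc a c)))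
    (hH : ContinuousOn H (Icc a c)) :
    IntervalIntegrable (fun u => F u * G u * H u) volume a c :=
  (intervalIntegrable_iff_integrableOn_Ioc_of_le hac).mpr
    ((hF.integrable_mul hG).mul_of_top_left (memLp_top_of_continuousOn_Icc hH))

end HolderBounds

/-- The Stieltjes integral `∫₀^{2π} g dx`, written after integration by parts. -/
noncomputable def stieltjesIntegral (g : ℝ → ℝ) (x : Icc (0 : ℝ) (2 * π) → ℝ) : ℝ :=
  g (2 * π) * pathExt x (2 * π) - ∫ u in (0 : ℝ)..(2 * π), pathExt x u * deriv g u

lemma wienerPairing_eq_stieltjesIntegral (h : ℝ → ℝ) (x : Icc (0 : ℝ) (2 * π) → ℝ) :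
    wienerPairing h x = stieltjesIntegral (deriv h) x :=
  rfl

section Stieltjes

variable {x y : Icc (0 : ℝ) (2 * π) → ℝ}

lemma stieltjesIntegral_add_left {g₁ g₂ : ℝ → ℝ} (hg₁ : ContDiff ℝ 1 g₁) (hg₂ : ContDiff ℝ 1 g₂)
    (hx : Continuous x) :
    stieltjesIntegral (g₁ + g₂) x = stieltjesIntegral g₁ x + stieltjesIntegral g₂ x := by
  have hderiv : deriv (g₁ + g₂) = deriv g₁ + deriv g₂ :=
    funext fun u => deriv_add (hg₁.differentiable one_ne_zero u) (hg₂.differentiable one_ne_zero u)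
  simp only [stieltjesIntegral, hderiv, Pi.add_apply, mul_add]
  rw [intervalIntegral.integral_add (intervalIntegrable_pathExt_mul hx (hg₁.continuous_deriv le_rfl))
    (intervalIntegrable_pathExt_mul hx (hg₂.continuous_deriv le_rfl))]
  ring

lemma stieltjesIntegral_add_right {g : ℝ → ℝ} (hg : Continuous (deriv g)) (hx : Continuous x)
    (hy : Continuous y) :
    stieltjesIntegral g (x + y) = stieltjesIntegral g x + stieltjesIntegral g y := by
  simp only [stieltjesIntegral, pathExt_add, Pi.add_apply, add_mul]
  rw [intervalIntegral.integral_add (intervalIntegrable_pathExt_mul hx hg)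
    (intervalIntegrable_pathExt_mul hy hg)]
  ring

lemma stieltjesIntegral_restrict {g α : ℝ → ℝ} (hg : ContDiff ℝ 1 g) (hα : ContDiff ℝ 1 α)
    (hα0 : α 0 = 0) :
    stieltjesIntegral g (fun u => α u.1) = ∫ u in (0 : ℝ)..(2 * π), deriv α u * g u := by
  have h02 : (0 : ℝ) ≤ 2 * π := by positivity
  have hibp := intervalIntegral.integral_mul_deriv_eq_deriv_mul (a := 0) (b := 2 * π)
    (fun u _ => (hα.differentiable one_ne_zero u).hasDerivAt)
    (fun u _ => (hg.differentiable one_ne_zero u).hasDerivAt)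
    ((hα.continuous_deriv le_rfl).intervalIntegrable _ _)
    ((hg.continuous_deriv le_rfl).intervalIntegrable _ _)
  have hpath : ∫ u in (0 : ℝ)..(2 * π), pathExt (fun v => α v.1) u * deriv g u
      = ∫ u in (0 : ℝ)..(2 * π), α u * deriv g u :=
    intervalIntegral.integral_congr fun u hu => by
      rw [uIcc_of_le h02] at hu
      rw [pathExt_restrict_of_mem α hu]
  rw [stieltjesIntegral, hpath, hibp, pathExt_restrict_of_mem α (right_mem_Icc.mpr h02), hα0]
  ring

end Stieltjes

noncomputable def cameronMartinExponent (t : ℝ) (α : ℝ → ℝ) (x : Icc (0 : ℝ) (2 * π) → ℝ) : ℝ :=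
  -(1 / (4 * t)) * (∫ u in (0 : ℝ)..(2 * π), (deriv α u) ^ 2) - (1 / (2 * t)) * wienerPairing α x

lemma cameronMartinExponent_add (t : ℝ) {α₁ α₂ : ℝ → ℝ} (hα₁ : ContDiff ℝ 2 α₁)
    (hα₂ : ContDiff ℝ 2 α₂) (hα₁0 : α₁ 0 = 0) {x : Icc (0 : ℝ) (2 * π) → ℝ} (hx : Continuous x) :
    cameronMartinExponent t (α₁ + α₂) x
      = cameronMartinExponent t α₁ x + cameronMartinExponent t α₂ (x + fun u => α₁ u.1) := by
  have hα₁' : ContDiff ℝ 1 (deriv α₁) := hα₁.deriv'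
  have hα₂' : ContDiff ℝ 1 (deriv α₂) := hα₂.deriv'
  have hderiv : deriv (α₁ + α₂) = deriv α₁ + deriv α₂ :=
    funext fun u => deriv_add (hα₁.differentiable two_ne_zero u) (hα₂.differentiable two_ne_zero u)
  have hsq : ∫ u in (0 : ℝ)..(2 * π), (deriv (α₁ + α₂) u) ^ 2
      = (∫ u in (0 : ℝ)..(2 * π), (deriv α₁ u) ^ 2)
        + 2 * (∫ u in (0 : ℝ)..(2 * π), deriv α₁ u * deriv α₂ u)
        + ∫ u in (0 : ℝ)..(2 * π), (deriv α₂ u) ^ 2 := by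
    have hc₁ := hα₁'.continuous
    have hc₂ := hα₂'.continuous
    have hi₁ : IntervalIntegrable (fun u => deriv α₁ u ^ 2) volume 0 (2 * π) :=
      (hc₁.pow 2).intervalIntegrable _ _
    have hi₂ : IntervalIntegrable (fun u => deriv α₂ u ^ 2) volume 0 (2 * π) :=
      (hc₂.pow 2).intervalIntegrable _ _
    have hi₁₂ : IntervalIntegrable (fun u => 2 * (deriv α₁ u * deriv α₂ u)) volume 0 (2 * π) :=
      (continuous_const.mul (hc₁.mul hc₂)).intervalIntegrable _ _
    simp only [hderiv, Pi.add_apply, add_sq, mul_assoc]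
    rw [intervalIntegral.integral_add (hi₁.add hi₁₂) hi₂, intervalIntegral.integral_add hi₁ hi₁₂,
      intervalIntegral.integral_const_mul]
  have hshift : wienerPairing α₂ (x + fun u => α₁ u.1)
      = wienerPairing α₂ x + ∫ u in (0 : ℝ)..(2 * π), deriv α₁ u * deriv α₂ u := by
    rw [wienerPairing_eq_stieltjesIntegral, wienerPairing_eq_stieltjesIntegral,
      stieltjesIntegral_add_right (y := fun u => α₁ u.1) (hα₂'.continuous_deriv le_rfl) hx
        (hα₁.continuous.comp continuous_subtype_val),
      stieltjesIntegral_restrict hα₂' (hα₁.of_le one_le_two) hα₁0]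
  have hsum : wienerPairing (α₁ + α₂) x = wienerPairing α₁ x + wienerPairing α₂ x := by
    rw [wienerPairing_eq_stieltjesIntegral, hderiv, stieltjesIntegral_add_left hα₁' hα₂' hx]
    rfl
  simp only [cameronMartinExponent, hsq, hsum, hshift]
  ring

noncomputable def multiplierExponent (lam : ℝ → ℂ) (b : ℝ → ℝ) (x : Icc (0 : ℝ) (2 * π) → ℝ) : ℂ :=
  ∫ u in (0 : ℝ)..(2 * π), lam u * (b u : ℂ) * Complex.exp ((pathExt x u : ℝ) : ℂ)

lemma multiplierExponent_shift (lam : ℝ → ℂ) (b α : ℝ → ℝ) (x : Icc (0 : ℝ) (2 * π) → ℝ) :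
    multiplierExponent lam b (x + fun u => α u.1)
      = multiplierExponent lam (fun u => Real.exp (α u) * b u) x := by
  refine intervalIntegral.integral_congr fun u hu => ?_
  rw [uIcc_of_le (by positivity)] at hu
  simp only [pathExt_add, Pi.add_apply, pathExt_restrict_of_mem α hu]
  push_cast [Complex.exp_add]
  ring

lemma multiplierExponent_add {lam : ℝ → ℂ} {b₁ b₂ : ℝ → ℝ}
    (hlam : MemLp lam 2 (volume.restrict (Ioc 0 (2 * π))))
    (hb₁ : MemLp b₁ 2 (volume.restrict (Ioc 0 (2 * π))))
    (hb₂ : MemLp b₂ 2 (volume.restrict (Ioc 0 (2 * π))))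
    {x : Icc (0 : ℝ) (2 * π) → ℝ} (hx : Continuous x) :
    multiplierExponent lam (b₁ + b₂) x = multiplierExponent lam b₁ x + multiplierExponent lam b₂ x := by
  have hexp : ContinuousOn (fun u => Complex.exp ((pathExt x u : ℝ) : ℂ)) (Icc 0 (2 * π)) :=
    Complex.continuous_exp.comp_continuousOn (Complex.continuous_ofReal.comp_continuousOn
      (continuousOn_pathExt hx))
  have hint : ∀ b : ℝ → ℝ, MemLp b 2 (volume.restrict (Ioc 0 (2 * π))) → IntervalIntegrable
      (fun u => lam u * (b u : ℂ) * Complex.exp ((pathExt x u : ℝ) : ℂ)) volume 0 (2 * π) :=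
    fun b hb => intervalIntegrable_mul_mul_of_memLp_two (by positivity) hlam hb.ofReal hexp
  rw [multiplierExponent, multiplierExponent, multiplierExponent,
    ← intervalIntegral.integral_add (hint b₁ hb₁) (hint b₂ hb₂)]
  refine intervalIntegral.integral_congr fun u _ => ?_
  push_cast [Pi.add_apply]
  ring

lemma wienerRhoC_eq_exp (t k : ℝ) (lam : ℝ → ℂ) (α b : ℝ → ℝ) (s : ℝ)
    (f : (Icc (0 : ℝ) (2 * π) → ℝ) → ℂ) (x : Icc (0 : ℝ) (2 * π) → ℝ) :
    wienerRhoC t k lam α b s f x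
      = Complex.exp (Complex.I * s + Complex.I * k * stieltjesIntegral α x
          + cameronMartinExponent t α x + multiplierExponent lam b x)
        * f (x + fun u => α u.1) := by
  simp only [Complex.exp_add]
  rfl

/-- The maps `ρ_{λ,k}` form a representation of the centrally extended based loop group
of the `ax+b` group: `ρ_{λ,k}(α₁,b₁,s₁) ∘ ρ_{λ,k}(α₂,b₂,s₂)
  = ρ_{λ,k}(α₁+α₂, e^{α₁}b₂+b₁, s₁+s₂+k∫₀^{2π}α₁'(u)α₂(u)du)` pointwise on all
functionals `f : C₀ → ℂ` (evaluated at points of `C₀`). -/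
theorem wienerRhoC_mul (t k : ℝ) (lam : ℝ → ℂ)
    (hlamRe : MemLp (fun u => (lam u).re) 2 (volume.restrict (Set.Ioc 0 (2 * π))))
    (hlamIm : MemLp (fun u => (lam u).im) 2 (volume.restrict (Set.Ioc 0 (2 * π))))
    (α₁ α₂ : ℝ → ℝ) (hα₁ : ContDiff ℝ 2 α₁) (hα₂ : ContDiff ℝ 2 α₂)
    (hα₁0 : α₁ 0 = 0)
    (b₁ b₂ : ℝ → ℝ) (hb₁ : MemLp b₁ 2 (volume.restrict (Set.Ioc 0 (2 * π))))
    (hb₂ : MemLp b₂ 2 (volume.restrict (Set.Ioc 0 (2 * π)))) (s₁ s₂ : ℝ)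
    (f : (Set.Icc (0 : ℝ) (2 * π) → ℝ) → ℂ)
    (x : Set.Icc (0 : ℝ) (2 * π) → ℝ) (hx : Continuous x) :
    wienerRhoC t k lam α₁ b₁ s₁ (wienerRhoC t k lam α₂ b₂ s₂ f) x
      = wienerRhoC t k lam (α₁ + α₂) (fun u => Real.exp (α₁ u) * b₂ u + b₁ u)
          (s₁ + s₂ + k * ∫ u in (0 : ℝ)..(2 * π), deriv α₁ u * α₂ u) f x := by
  have hlam : MemLp lam 2 (volume.restrict (Ioc 0 (2 * π))) :=
    memLp_re_im_iff.mp ⟨hlamRe, hlamIm⟩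
  have hα₁c : Continuous fun u : Icc (0 : ℝ) (2 * π) => α₁ u.1 :=
    hα₁.continuous.comp continuous_subtype_val
  have hα₁b₂ : MemLp (fun u => Real.exp (α₁ u) * b₂ u) 2 (volume.restrict (Ioc 0 (2 * π))) :=
    hb₂.continuousOn_mul (Real.continuous_exp.comp hα₁.continuous).continuousOn
  have hphase : stieltjesIntegral α₁ x + stieltjesIntegral α₂ (x + fun u => α₁ u.1)
      = (∫ u in (0 : ℝ)..(2 * π), deriv α₁ u * α₂ u) + stieltjesIntegral (α₁ + α₂) x := by
    rw [stieltjesIntegral_add_right (hα₂.continuous_deriv one_le_two) hx hα₁c,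
      stieltjesIntegral_restrict (hα₂.of_le one_le_two) (hα₁.of_le one_le_two) hα₁0,
      stieltjesIntegral_add_left (hα₁.of_le one_le_two) (hα₂.of_le one_le_two) hx]
    ring
  have hmult : multiplierExponent lam b₁ x + multiplierExponent lam b₂ (x + fun u => α₁ u.1)
      = multiplierExponent lam (fun u => Real.exp (α₁ u) * b₂ u + b₁ u) x := by
    rw [multiplierExponent_shift, add_comm]
    exact (multiplierExponent_add hlam hα₁b₂ hb₁ hx).symm
  rw [wienerRhoC_eq_exp, wienerRhoC_eq_exp, wienerRhoC_eq_exp, ← mul_assoc, ← Complex.exp_add,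
    add_assoc x, cameronMartinExponent_add t hα₁ hα₂ hα₁0 hx, ← hmult]
  congr 2
  have hphaseC := congrArg (fun r : ℝ => (r : ℂ)) hphase
  push_cast at hphaseC ⊢
  linear_combination Complex.I * k * hphaseC
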